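/- An element M_σ of the monomial basis of ℤS is primitive (δ(M_σ) = M_σ ⊗ 1 + 1 ⊗ M_σ) if and only if σ has no global descent, i.e., σ is indecomposable for the product △; and the submodule of primitive elements of ℤS is spanned by these M_σ. -/

import Mathlib

/-- Standardization (0-based): replace each letter by its rank among the letters of `w`. -/
def stW (w : List ℕ) : List ℕ := w.map (fun x => (w.filter (· < x)).length)

/-- `w` is the one-line word of a permutation of `{0, …, n-1}` where `n = w.length`. -/
def IsPermWord (w : List ℕ) : Prop := w.Perm (List.range w.length)

/-- The inversion set of a word: pairs `(j, i)` with `j > i` and `j` to the left of `i`. -/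
def invSet (w : List ℕ) : Set (ℕ × ℕ) :=
  {p | p.2 < p.1 ∧ ∃ k l : ℕ, k < l ∧ w[k]? = some p.1 ∧ w[l]? = some p.2}

/-- The right weak order: inclusion of inversion sets. -/
def weakLe (u v : List ℕ) : Prop := invSet u ⊆ invSet v

/-- Left shifted concatenation `v △ u`: the word `v̄ u`, `v̄` being `v` shifted by `|u|`. -/
def triangle (v u : List ℕ) : List ℕ := v.map (· + u.length) ++ u

/-- Right shifted concatenation `u □ v`: the word `u v̄`, `v̄` being `v` shifted by `|u|`. -/
def squareC (u v : List ℕ) : List ℕ := u ++ v.map (· + u.length)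

lemma nodup_of_isPermWord {w : List ℕ} (h : IsPermWord w) : w.Nodup :=
  h.nodup_iff.mpr (List.nodup_range)

/-- Standardizing a word with distinct letters yields a permutation word. -/
lemma isPermWord_stW {w : List ℕ} (h : w.Nodup) : IsPermWord (stW w) := by
  show (stW w).Perm (List.range (stW w).length)
  classical
  set f : ℕ → ℕ := fun x => (w.filter (· < x)).length with hf
  have hcard : ∀ x, f x = (w.toFinset.filter (· < x)).card := by
    intro x
    rw [hf]
    simp only
    rw [← List.toFinset_card_of_nodup (h.filter _)]
    congr 1
    ext z
    simp [List.mem_filter]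
  have hmono : ∀ x ∈ w, ∀ y ∈ w, x < y → f x < f y := by
    intro x hx y hy hxy
    rw [hcard, hcard]
    apply Finset.card_lt_card
    constructor
    · intro z hz
      simp only [Finset.mem_filter, decide_eq_true_eq] at hz ⊢
      exact ⟨hz.1, lt_trans hz.2 hxy⟩
    · intro hcon
      have hxmem : x ∈ w.toFinset.filter (· < y) := by
        simp only [Finset.mem_filter, decide_eq_true_eq]
        exact ⟨List.mem_toFinset.2 hx, hxy⟩
      have := hcon hxmem
      simp only [Finset.mem_filter, decide_eq_true_eq] at this
      exact lt_irrefl x this.2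
  have hinj : ∀ x ∈ w, ∀ y ∈ w, f x = f y → x = y := by
    intro x hx y hy hxy
    rcases lt_trichotomy x y with h1 | h1 | h1
    · exact absurd hxy (Nat.ne_of_lt (hmono x hx y hy h1))
    · exact h1
    · exact absurd hxy.symm (Nat.ne_of_lt (hmono y hy x hx h1))
  have hltn : ∀ x ∈ w, f x < w.length := by
    intro x hx
    rw [hf]
    simp only
    refine List.length_filter_lt_length_iff_exists.2 ⟨x, hx, by simp⟩
  have hnodup : (stW w).Nodup := List.Nodup.map_on hinj h
  have hlen : (stW w).length = w.length := by simp [stW]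
  rw [hlen]
  refine (List.perm_ext_iff_of_nodup hnodup (List.nodup_range)).2 ?_
  intro k
  simp only [List.mem_range]
  constructor
  · rintro hk
    simp only [stW, List.mem_map] at hk
    obtain ⟨x, hx, rfl⟩ := hk
    exact hltn x hx
  · intro hk
    -- surjectivity via cardinality
    have himage : w.toFinset.image f = Finset.range w.length := by
      apply Finset.eq_of_subset_of_card_le
      · intro m hm
        simp only [Finset.mem_image, List.mem_toFinset] at hm
        obtain ⟨x, hx, rfl⟩ := hm
        exact Finset.mem_range.2 (hltn x hx)
      · rw [Finset.card_range, Finset.card_image_of_injOn ?_]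
        · rw [List.toFinset_card_of_nodup h]
        · intro x hx y hy
          exact hinj x (List.mem_toFinset.1 hx) y (List.mem_toFinset.1 hy)
    have : k ∈ w.toFinset.image f := by rw [himage]; exact Finset.mem_range.2 hk
    simp only [Finset.mem_image, List.mem_toFinset] at this
    obtain ⟨x, hx, rfl⟩ := this
    simp only [stW, List.mem_map]
    exact ⟨x, hx, rfl⟩


lemma isPermWord_stW_filter {w : List ℕ} (h : IsPermWord w)
    (p : ℕ → Bool) : IsPermWord (stW (w.filter p)) :=
  isPermWord_stW ((nodup_of_isPermWord h).filter _)

lemma isPermWord_filter_lt {w : List ℕ} (h : IsPermWord w) (i : ℕ) :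
    IsPermWord (w.filter (· < i)) := by
  have h1 : (w.filter (· < i)).Perm ((List.range w.length).filter (· < i)) := h.filter _
  have h2 : ((List.range w.length).filter (· < i)).Perm (List.range (min i w.length)) := by
    refine (List.perm_ext_iff_of_nodup ((List.nodup_range).filter _) (List.nodup_range)).2 ?_
    intro x
    simp only [List.mem_filter, List.mem_range, decide_eq_true_eq, lt_min_iff]
    tauto
  have h3 := h1.trans h2
  have hl : (w.filter (· < i)).length = min i w.length := by simpa using h3.length_eq
  unfold IsPermWord
  rw [hl]; exact h3

/-- The type of permutation words. -/
abbrev PW : Type := {w : List ℕ // IsPermWord w}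

/-- `ℤS`: the free `ℤ`-module on the set of all permutations. -/
abbrev ZS : Type := PW →₀ ℤ

open scoped TensorProduct

/-- The coproduct on a basis permutation:
`δ(σ) = Σ_{0 ≤ i ≤ n} σ|{1,…,i} ⊗ st(σ|{i+1,…,n})`. -/
noncomputable def deltaWord (w : PW) : ZS ⊗[ℤ] ZS :=
  ∑ i ∈ Finset.range (w.1.length + 1),
    Finsupp.single (⟨w.1.filter (· < i), isPermWord_filter_lt w.2 i⟩ : PW) (1 : ℤ) ⊗ₜ
      Finsupp.single
        (⟨stW (w.1.filter (fun x => i ≤ x)), isPermWord_stW_filter w.2 _⟩ : PW) (1 : ℤ)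

/-- The coproduct `δ` of the Malvenuto–Reutenauer Hopf algebra `ℤS`
(standardized unshuffling), as a `ℤ`-linear map. -/
noncomputable def Delta : ZS →ₗ[ℤ] ZS ⊗[ℤ] ZS :=
  Finsupp.lsum ℤ (fun w => LinearMap.toSpanSingleton ℤ _ (deltaWord w))

/-- The finite set of all permutation words of `{0,…,n-1}`. -/
def permsOf (n : ℕ) : Finset (List ℕ) := (List.range n).permutations.toFinset

/-- A nonempty permutation word is `△`-indecomposable (equivalently, it has no
global descent). -/
def TriIndec (w : List ℕ) : Prop :=
  w ≠ [] ∧ ∀ u v : List ℕ, IsPermWord u → IsPermWord v → w = triangle v u → u = [] ∨ v = []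

/-- The unit of `ℤS`: the empty permutation. -/
noncomputable def oneZS : ZS := Finsupp.single ⟨[], by simp [IsPermWord]⟩ 1


/-!
The right weak order has the interval property: `σ ≤ v △ u` iff `σ|_{<|u|} ≤ u` and
`st(σ|_{≥|u|}) ≤ v`. Expanding `δ(σ) = Σ_i σ|_{<i} ⊗ st(σ|_{≥i})` in the monomial basis and
reindexing the pairs `(u, v)` by `w = v △ u` gives `δ(σ) = Σ_{σ ≤ w} Σ_{w = v △ u} M_u ⊗ M_v`, so
Möbius inversion over the weak order yields `δ(M_w) = Σ_{w = v △ u} M_u ⊗ M_v`.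
Hence `δ(M_σ) - M_σ ⊗ 1 - 1 ⊗ M_σ` is the sum of the basis tensors `M_u ⊗ M_v` over the
nontrivial factorizations `σ = v △ u` (and `-1 ⊗ 1` for `σ = ∅`). Different `σ` involve different
basis tensors, so `Σ c_σ M_σ` is primitive iff `c_σ = 0` whenever `σ` is `△`-decomposable.
-/

section PairSublist

open List

variable {α : Type*} {a b : α}

lemma List.pair_sublist_iff_getElem? {w : List α} :
    [b, a] <+ w ↔ ∃ k l : ℕ, k < l ∧ w[k]? = some b ∧ w[l]? = some a := by
  constructor
  · intro h
    induction w with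
    | nil => simp at h
    | cons x t ih =>
      cases h with
      | cons _ h' =>
        obtain ⟨k, l, hkl, hk, hl⟩ := ih h'
        exact ⟨k + 1, l + 1, by omega, by simpa using hk, by simpa using hl⟩
      | cons_cons _ h' =>
        obtain ⟨l, hl, he⟩ := getElem_of_mem (h'.subset (mem_singleton_self a))
        exact ⟨0, l + 1, by omega, by simp, by simp [getElem?_eq_getElem hl, he]⟩
  · rintro ⟨k, l, hkl, hk, hl⟩
    induction w generalizing k l with
    | nil => simp at hk
    | cons x t ih =>
      match k, l with
      | 0, l + 1 =>
        obtain rfl : x = b := by simpa using hk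
        obtain ⟨hlt, rfl⟩ := List.getElem?_eq_some_iff.1 (by simpa using hl)
        exact (singleton_sublist.2 (getElem_mem hlt)).cons_cons _
      | k + 1, l + 1 =>
        exact (ih k l (by omega) (by simpa using hk) (by simpa using hl)).cons x

lemma List.pair_sublist_append_iff {x y : List α} :
    [b, a] <+ x ++ y ↔ [b, a] <+ x ∨ (b ∈ x ∧ a ∈ y) ∨ [b, a] <+ y := by
  rw [sublist_append_iff]
  constructor
  · rintro ⟨l₁, l₂, h, h₁, h₂⟩
    rcases l₁ with _ | ⟨c, _ | ⟨d, _ | ⟨e, l₁⟩⟩⟩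
    · exact .inr (.inr (by simpa [h] using h₂))
    · obtain ⟨rfl, rfl⟩ : c = b ∧ l₂ = [a] := by simpa [eq_comm] using h
      exact .inr (.inl ⟨singleton_sublist.1 h₁, singleton_sublist.1 h₂⟩)
    · obtain ⟨rfl, rfl, rfl⟩ : c = b ∧ d = a ∧ l₂ = [] := by simpa [eq_comm] using h
      exact .inl h₁
    · simp at h
  · rintro (h | ⟨hb, ha⟩ | h)
    · exact ⟨[b, a], [], by simp, h, nil_sublist _⟩
    · exact ⟨[b], [a], rfl, singleton_sublist.2 hb, singleton_sublist.2 ha⟩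
    · exact ⟨[], [b, a], rfl, nil_sublist _, h⟩

lemma List.pair_sublist_filter_iff {w : List α} {p : α → Bool} :
    [b, a] <+ w.filter p ↔ [b, a] <+ w ∧ p b ∧ p a := by
  constructor
  · intro h
    exact ⟨h.trans filter_sublist, (mem_filter.1 (h.subset (by simp))).2,
      (mem_filter.1 (h.subset (by simp))).2⟩
  · rintro ⟨h, hb, ha⟩
    simpa [hb, ha] using h.filter p

lemma List.pair_sublist_map_iff {β : Type*} {f : α → β} (hf : Function.Injective f)
    {w : List α} : [f b, f a] <+ w.map f ↔ [b, a] <+ w := by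
  refine ⟨fun h => ?_, fun h => by simpa using h.map f⟩
  obtain ⟨l, hl, he⟩ := sublist_map_iff.1 h
  rcases l with _ | ⟨b', _ | ⟨a', _ | _⟩⟩ <;> simp only [map_cons, map_nil, cons.injEq,
    reduceCtorEq, and_false, and_true] at he
  rwa [hf he.1, hf he.2]

lemma List.Nodup.not_pair_sublist_swap {w : List α} (hw : w.Nodup) (h : [b, a] <+ w) :
    ¬ [a, b] <+ w := by
  intro h'
  induction w with
  | nil => simp at h
  | cons x t ih =>
    have hx : x ∉ t := hw.notMem
    cases h with
    | cons _ h =>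
      cases h' with
      | cons _ h' => exact ih hw.of_cons h h'
      | cons_cons _ h' => exact hx (h.subset (by simp))
    | cons_cons _ h =>
      cases h' with
      | cons _ h' => exact hx (h'.subset (by simp))
      | cons_cons _ h' => exact hx (h'.subset (by simp))

end PairSublist

lemma Finsupp.linearIndependent_of_unitriangular {ι R : Type*} [Ring R] (v : ι → ι →₀ R)
    (g : ι → ℕ) (hdiag : ∀ i, v i i = 1) (htri : ∀ i j, v i j ≠ 0 → j = i ∨ g j < g i) :
    LinearIndependent R v := by
  classical
  rw [linearIndependent_iff']
  intro s c hs i hi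
  by_contra hci
  obtain ⟨j, hj, hmax⟩ := (s.filter (c · ≠ 0)).exists_max_image g ⟨i, by simp [hi, hci]⟩
  obtain ⟨hjs, hcj⟩ := Finset.mem_filter.1 hj
  have hsj := congrArg (· j) hs
  simp only [Finsupp.finsetSum_apply, Finsupp.smul_apply, smul_eq_mul, Finsupp.coe_zero,
    Pi.zero_apply] at hsj
  rw [Finset.sum_eq_single j (fun k hks hkj => ?_) (absurd hjs), hdiag, mul_one] at hsj
  · exact hcj hsj
  · by_cases hck : c k = 0
    · rw [hck, zero_mul]
    by_cases hvk : v k j = 0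
    · rw [hvk, mul_zero]
    rcases htri k j hvk with h | h
    · exact absurd h.symm hkj
    · exact absurd (hmax k (Finset.mem_filter.2 ⟨hks, hck⟩)) (not_le.2 h)

theorem Module.Basis.ker_eq_span_image {ι R V W : Type*} [Semiring R] [AddCommMonoid V]
    [Module R V] [AddCommMonoid W] [Module R W] (b : Module.Basis ι R V) (f : V →ₗ[R] W)
    (S : Set ι) (hS : ∀ i ∈ S, f (b i) = 0)
    (hdual : ∀ i ∉ S, ∃ φ : W →ₗ[R] R, ∀ j, φ (f (b j)) = b.coord i (b j)) :
    LinearMap.ker f = Submodule.span R (b '' S) := by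
  refine le_antisymm (fun x hx => b.mem_span_image.2 fun i hi => ?_)
    (Submodule.span_le.2 <| Set.image_subset_iff.2 hS)
  by_contra hiS
  obtain ⟨φ, hφ⟩ := hdual i hiS
  have := LinearMap.congr_fun (b.ext (f₁ := φ ∘ₗ f) hφ) x
  rw [LinearMap.comp_apply, LinearMap.mem_ker.1 hx, map_zero, Module.Basis.coord_apply] at this
  exact (Finsupp.mem_support_iff.1 hi) this.symm

section InvSet

open List

variable {w : List ℕ} {a b : ℕ}

lemma mem_invSet : (b, a) ∈ invSet w ↔ a < b ∧ [b, a] <+ w := by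
  rw [pair_sublist_iff_getElem?]
  rfl

lemma mem_of_mem_invSet (h : (b, a) ∈ invSet w) : b ∈ w ∧ a ∈ w :=
  ⟨(mem_invSet.1 h).2.subset (by simp), (mem_invSet.1 h).2.subset (by simp)⟩

lemma mem_invSet_filter {p : ℕ → Bool} :
    (b, a) ∈ invSet (w.filter p) ↔ (b, a) ∈ invSet w ∧ p b ∧ p a := by
  simp only [mem_invSet, pair_sublist_filter_iff, and_assoc]

lemma mem_invSet_map_add {k : ℕ} :
    (b + k, a + k) ∈ invSet (w.map (· + k)) ↔ (b, a) ∈ invSet w := by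
  simp only [mem_invSet, pair_sublist_map_iff (add_left_injective k), add_lt_add_iff_right]

lemma mem_invSet_append {x y : List ℕ} :
    (b, a) ∈ invSet (x ++ y) ↔
      (b, a) ∈ invSet x ∨ (a < b ∧ b ∈ x ∧ a ∈ y) ∨ (b, a) ∈ invSet y := by
  simp only [mem_invSet, pair_sublist_append_iff]
  tauto

lemma List.Nodup.pairwise_invSet (hw : w.Nodup) :
    w.Pairwise fun x y => (y < x ∧ (x, y) ∈ invSet w) ∨ (x < y ∧ (y, x) ∉ invSet w) := by
  rw [pairwise_iff_forall_sublist]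
  intro x y hxy
  rcases lt_trichotomy x y with hlt | rfl | hlt
  · exact .inr ⟨hlt, fun hyx => Nodup.not_pair_sublist_swap hw hxy (mem_invSet.1 hyx).2⟩
  · exact absurd hxy (nodup_iff_sublist.1 hw x)
  · exact .inl ⟨hlt, mem_invSet.2 ⟨hlt, hxy⟩⟩

end InvSet

namespace IsPermWord

open List

variable {w u v : List ℕ}

lemma mem_iff_lt (h : IsPermWord w) {x : ℕ} : x ∈ w ↔ x < w.length := by
  rw [h.mem_iff, mem_range]

/-- Both words are sorted by the precedence relation `List.Nodup.pairwise_invSet` read off the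
common inversion set, and a total order has only one sorted arrangement. -/
lemma weakLe_antisymm (hu : IsPermWord u) (hv : IsPermWord v) (hlen : u.length = v.length)
    (h₁ : weakLe u v) (h₂ : weakLe v u) : u = v := by
  have hv' := Nodup.pairwise_invSet (nodup_of_isPermWord hv)
  rw [← h₁.antisymm h₂] at hv'
  refine (hu.trans (hlen ▸ hv.symm)).eq_of_pairwise ?_
    (Nodup.pairwise_invSet (nodup_of_isPermWord hu)) hv'
  rintro x y - - (⟨h1, h1'⟩ | ⟨h1, h1'⟩) (⟨h2, h2'⟩ | ⟨h2, h2'⟩) <;> first | omega | contradiction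

end IsPermWord

section Standardization

open List

lemma length_filter_range_lt (x n : ℕ) : ((range n).filter (· < x)).length = min x n := by
  induction n with
  | zero => simp
  | succ n ih =>
    rw [range_succ, filter_append]
    by_cases h : n < x <;> simp [h, ih] <;> omega

lemma length_filter_range_ge (i n : ℕ) :
    ((range n).filter (fun x => i ≤ x)).length = n - i := by
  induction n with
  | zero => simp
  | succ n ih =>
    rw [range_succ, filter_append]
    by_cases h : i ≤ n <;> simp [h, ih] <;> omega

lemma length_filter_range_Ico (i x n : ℕ) :
    ((range n).filter (fun a => decide (a < x) && decide (i ≤ a))).length = min x n - min i n := by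
  induction n with
  | zero => simp
  | succ n ih =>
    rw [range_succ, filter_append]
    by_cases h1 : i ≤ n <;> by_cases h2 : n < x <;> simp [h1, h2, ih] <;> omega

@[simp]
lemma length_stW (w : List ℕ) : (stW w).length = w.length :=
  length_map _

lemma stW_map_add (w : List ℕ) (k : ℕ) : stW (w.map (· + k)) = stW w := by
  unfold stW
  rw [map_map]
  refine map_congr_left fun x _ => ?_
  simp [filter_map, Function.comp_def]

namespace IsPermWord

variable {w : List ℕ}

lemma length_filter (h : IsPermWord w) (p : ℕ → Bool) :
    (w.filter p).length = ((range w.length).filter p).length := by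
  simpa only [← countP_eq_length_filter] using h.countP_eq p

lemma length_filter_lt (h : IsPermWord w) (i : ℕ) :
    (w.filter (· < i)).length = min i w.length := by
  rw [h.length_filter, length_filter_range_lt]

lemma length_filter_ge (h : IsPermWord w) (i : ℕ) :
    (w.filter (fun x => i ≤ x)).length = w.length - i := by
  rw [h.length_filter, length_filter_range_ge]

lemma stW_eq (h : IsPermWord w) : stW w = w := by
  refine (map_congr_left fun x hx => ?_).trans (map_id w)
  rw [h.length_filter_lt, id, min_eq_left (h.mem_iff_lt.1 hx).le]

lemma stW_filter_ge (h : IsPermWord w) (k : ℕ) :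
    stW (w.filter (fun x => k ≤ x)) = (w.filter (fun x => k ≤ x)).map (· - k) := by
  refine map_congr_left fun x hx => ?_
  obtain ⟨hxw, hkx⟩ := mem_filter.1 hx
  rw [filter_filter, h.length_filter, length_filter_range_Ico]
  have := h.mem_iff_lt.1 hxw
  simp at hkx
  omega

lemma mem_invSet_stW_filter_ge (h : IsPermWord w) {k b a : ℕ} :
    (b, a) ∈ invSet (stW (w.filter (fun x => k ≤ x))) ↔ (b + k, a + k) ∈ invSet w := by
  have hshift : (stW (w.filter (fun x => k ≤ x))).map (· + k) = w.filter (fun x => k ≤ x) := by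
    rw [h.stW_filter_ge, map_map]
    refine (map_congr_left fun x hx => ?_).trans (map_id _)
    simp only [mem_filter, decide_eq_true_eq] at hx
    simp only [Function.comp_apply, id_eq]
    omega
  rw [← mem_invSet_map_add (k := k), hshift, mem_invSet_filter]
  simp

end IsPermWord

end Standardization

section Triangle

open List

variable {u v c d : List ℕ}

@[simp]
lemma length_triangle : (triangle v u).length = v.length + u.length := by
  simp [triangle]

lemma triangle_nil_left : triangle [] u = u := rfl

lemma triangle_nil_right : triangle v [] = v := by
  simp [triangle]

lemma triangle_eq_nil_iff : triangle v u = [] ↔ v = [] ∧ u = [] := by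
  simp [triangle]

lemma isPermWord_triangle (hu : IsPermWord u) (hv : IsPermWord v) :
    IsPermWord (triangle v u) := by
  unfold IsPermWord
  rw [length_triangle, Nat.add_comm, range_add]
  exact perm_append_comm.trans (hu.append (by simpa only [Nat.add_comm u.length] using hv.map _))

lemma triangle_filter_lt (hu : IsPermWord u) : (triangle v u).filter (· < u.length) = u := by
  rw [triangle, filter_append, filter_eq_nil_iff.2 (by simp), filter_eq_self.2 (by
    simpa using fun x hx => hu.mem_iff_lt.1 hx), nil_append]

lemma triangle_filter_ge (hu : IsPermWord u) :
    (triangle v u).filter (fun x => u.length ≤ x) = v.map (· + u.length) := by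
  rw [triangle, filter_append, filter_eq_self.2 (by simp), filter_eq_nil_iff.2 (by
    simpa using fun x hx => hu.mem_iff_lt.1 hx), append_nil]

lemma stW_triangle_filter_ge (hu : IsPermWord u) (hv : IsPermWord v) :
    stW ((triangle v u).filter (fun x => u.length ≤ x)) = v := by
  rw [triangle_filter_ge hu, stW_map_add, hv.stW_eq]

lemma mem_invSet_triangle_of_lt {b a : ℕ} (hb : b < c.length) :
    (b, a) ∈ invSet (triangle d c) ↔ (b, a) ∈ invSet c := by
  have hbd : b ∉ d.map (· + c.length) := by simp; omega
  rw [triangle, mem_invSet_append]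
  simp only [hbd, false_and, and_false, false_or,
    iff_false_intro fun h => hbd (mem_of_mem_invSet h).1]

lemma mem_invSet_triangle_add (hc : IsPermWord c) {b a : ℕ} :
    (b + c.length, a + c.length) ∈ invSet (triangle d c) ↔ (b, a) ∈ invSet d := by
  have hac : a + c.length ∉ c := by rw [hc.mem_iff_lt]; omega
  rw [triangle, mem_invSet_append, mem_invSet_map_add]
  simp only [hac, and_false, false_or, or_iff_left_iff_imp]
  exact fun h => absurd (mem_of_mem_invSet h).2 hac

lemma mem_invSet_triangle_of_lt_of_le (hc : IsPermWord c) (hd : IsPermWord d) {b a : ℕ}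
    (ha : a < c.length) (hb : c.length ≤ b) (hbn : b < c.length + d.length) :
    (b, a) ∈ invSet (triangle d c) := by
  rw [triangle, mem_invSet_append]
  refine .inr (.inl ⟨by omega, mem_map.2 ⟨b - c.length, hd.mem_iff_lt.2 (by omega), by omega⟩,
    hc.mem_iff_lt.2 ha⟩)

theorem weakLe_triangle_iff {σ : List ℕ} (hσ : IsPermWord σ) (hc : IsPermWord c)
    (hd : IsPermWord d) (hlen : σ.length = c.length + d.length) :
    weakLe σ (triangle d c) ↔
      weakLe (σ.filter (· < c.length)) c ∧
        weakLe (stW (σ.filter (fun x => c.length ≤ x))) d := by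
  constructor
  · intro h
    constructor
    · rintro ⟨b, a⟩ hba
      obtain ⟨hσba, hb, -⟩ := mem_invSet_filter.1 hba
      exact (mem_invSet_triangle_of_lt (by simpa using hb)).1 (h hσba)
    · rintro ⟨b, a⟩ hba
      exact (mem_invSet_triangle_add hc).1 (h (hσ.mem_invSet_stW_filter_ge.1 hba))
  · rintro ⟨h₁, h₂⟩ ⟨b, a⟩ hba
    have hab := (mem_invSet.1 hba).1
    by_cases hb : b < c.length
    · exact (mem_invSet_triangle_of_lt hb).2
        (h₁ (mem_invSet_filter.2 ⟨hba, by simpa using hb, by simpa using hab.trans hb⟩))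
    by_cases ha : c.length ≤ a
    · obtain ⟨a, rfl⟩ := Nat.exists_eq_add_of_le' ha
      obtain ⟨b, rfl⟩ := Nat.exists_eq_add_of_le' (ha.trans hab.le)
      exact (mem_invSet_triangle_add hc).2 (h₂ (hσ.mem_invSet_stW_filter_ge.2 hba))
    · have hbn := hσ.mem_iff_lt.1 (mem_of_mem_invSet hba).1
      exact mem_invSet_triangle_of_lt_of_le hc hd (by omega) (by omega) (by omega)

end Triangle

section WeakOrder

open scoped Classical

/-- Non-inversions are counted inside the box `[0, |w|)²`, so that the count strictly decreases
up the weak order. -/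
noncomputable def nonInvCount (w : List ℕ) : ℕ :=
  ((Finset.range w.length ×ˢ Finset.range w.length).filter (· ∉ invSet w)).card

lemma nonInvCount_lt {u v : List ℕ} (hu : IsPermWord u) (hv : IsPermWord v)
    (hlen : u.length = v.length) (hle : weakLe u v) (hne : u ≠ v) :
    nonInvCount v < nonInvCount u := by
  obtain ⟨⟨b, a⟩, hv', hu'⟩ := Set.not_subset.1 fun h => hne (hu.weakLe_antisymm hv hlen hle h)
  have hba := mem_of_mem_invSet hv'
  unfold nonInvCount
  rw [hlen]
  refine Finset.card_lt_card ((Finset.ssubset_iff_of_subset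
    (Finset.monotone_filter_right _ fun p _ hp hpu => hp (hle hpu))).2 ⟨(b, a), ?_, ?_⟩)
  · simpa [Finset.mem_filter, hv.mem_iff_lt.1 hba.1, hv.mem_iff_lt.1 hba.2] using hu'
  · simp [hv']

noncomputable def weakUpper (u : List ℕ) : Finset (List ℕ) := (permsOf u.length).filter (weakLe u)

lemma mem_permsOf {w : List ℕ} {n : ℕ} : w ∈ permsOf n ↔ IsPermWord w ∧ w.length = n := by
  rw [permsOf, List.mem_toFinset, List.mem_permutations]
  constructor
  · intro h
    have hl : w.length = n := by simpa using h.length_eq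
    exact ⟨by rwa [IsPermWord, hl], hl⟩
  · rintro ⟨h, rfl⟩
    exact h

lemma mem_weakUpper {u w : List ℕ} :
    w ∈ weakUpper u ↔ IsPermWord w ∧ w.length = u.length ∧ weakLe u w := by
  rw [weakUpper, Finset.mem_filter, mem_permsOf, and_assoc]

lemma self_mem_weakUpper {u : List ℕ} (hu : IsPermWord u) : u ∈ weakUpper u :=
  mem_weakUpper.2 ⟨hu, rfl, subset_rfl⟩

lemma weakUpper_nil : weakUpper [] = {[]} := by
  ext w
  rw [mem_weakUpper, Finset.mem_singleton]
  constructor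
  · rintro ⟨-, hl, -⟩
    exact List.eq_nil_of_length_eq_zero hl
  · rintro rfl
    exact ⟨by simp [IsPermWord], rfl, subset_rfl⟩

lemma nonInvCount_lt_of_mem_erase_weakUpper {u w : List ℕ} (hu : IsPermWord u)
    (hw : w ∈ (weakUpper u).erase u) : IsPermWord w ∧ nonInvCount w < nonInvCount u := by
  obtain ⟨hne, hw⟩ := Finset.mem_erase.1 hw
  obtain ⟨hwp, hlen, hle⟩ := mem_weakUpper.1 hw
  exact ⟨hwp, nonInvCount_lt hu hwp hlen.symm hle hne.symm⟩

theorem weakUpper_induction {P : List ℕ → Prop}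
    (ih : ∀ u, IsPermWord u → (∀ w ∈ (weakUpper u).erase u, P w) → P u) :
    ∀ u, IsPermWord u → P u := by
  intro u hu
  induction hn : nonInvCount u using Nat.strong_induction_on generalizing u with
  | _ n IH =>
    refine ih u hu fun w hw => ?_
    obtain ⟨hwp, hlt⟩ := nonInvCount_lt_of_mem_erase_weakUpper hu hw
    exact IH _ (hn ▸ hlt) w hwp rfl

end WeakOrder

open scoped Classical in
/-- `M` is the monomial basis, defined by `σ = Σ_{σ ≤ w} M_w`. -/
def IsMonomialFamily (M : List ℕ → ZS) : Prop :=
  ∀ σ : PW, Finsupp.single σ (1 : ℤ) =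
    ∑ w ∈ permsOf σ.1.length, if weakLe σ.1 w then M w else 0

namespace IsMonomialFamily

variable {M : List ℕ → ZS}

lemma single_eq_sum_weakUpper (hM : IsMonomialFamily M) (σ : PW) :
    Finsupp.single σ (1 : ℤ) = ∑ w ∈ weakUpper σ.1, M w := by
  rw [hM σ, weakUpper, Finset.sum_filter]

lemma eq_single_sub_sum (hM : IsMonomialFamily M) (σ : PW) :
    M σ.1 = Finsupp.single σ (1 : ℤ) - ∑ w ∈ (weakUpper σ.1).erase σ.1, M w := by
  rw [hM.single_eq_sum_weakUpper, ← Finset.add_sum_erase _ _ (self_mem_weakUpper σ.2),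
    add_sub_cancel_right]

lemma eq_or_nonInvCount_lt_of_apply_ne_zero (hM : IsMonomialFamily M) :
    ∀ u, IsPermWord u → ∀ τ : PW, M u τ ≠ 0 → τ.1 = u ∨ nonInvCount τ.1 < nonInvCount u := by
  refine weakUpper_induction fun u hu ih τ hτ => ?_
  by_cases hτu : τ.1 = u
  · exact .inl hτu
  rw [hM.eq_single_sub_sum ⟨u, hu⟩, Finsupp.sub_apply,
    Finsupp.single_eq_of_ne (fun h => hτu (congrArg Subtype.val h)), zero_sub, neg_ne_zero,
    Finsupp.finsetSum_apply] at hτ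
  obtain ⟨w, hw, hwτ⟩ := Finset.exists_ne_zero_of_sum_ne_zero hτ
  have hlt := (nonInvCount_lt_of_mem_erase_weakUpper hu hw).2
  rcases ih w hw τ hwτ with hτw | hτw
  · exact .inr (hτw ▸ hlt)
  · exact .inr (hτw.trans hlt)

lemma apply_self (hM : IsMonomialFamily M) (σ : PW) : M σ.1 σ = 1 := by
  rw [hM.eq_single_sub_sum σ, Finsupp.sub_apply, Finsupp.single_eq_same,
    Finsupp.finsetSum_apply, Finset.sum_eq_zero, sub_zero]
  intro w hw
  obtain ⟨hwp, hlt⟩ := nonInvCount_lt_of_mem_erase_weakUpper σ.2 hw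
  by_contra hne
  rcases hM.eq_or_nonInvCount_lt_of_apply_ne_zero w hwp σ hne with h | h
  · exact (Finset.mem_erase.1 hw).1 h.symm
  · omega

lemma linearIndependent (hM : IsMonomialFamily M) : LinearIndependent ℤ fun σ : PW => M σ.1 :=
  Finsupp.linearIndependent_of_unitriangular _ (fun σ => nonInvCount σ.1) hM.apply_self
    fun σ τ h => (hM.eq_or_nonInvCount_lt_of_apply_ne_zero σ.1 σ.2 τ h).imp Subtype.ext id

lemma top_le_span (hM : IsMonomialFamily M) :
    ⊤ ≤ Submodule.span ℤ (Set.range fun σ : PW => M σ.1) := by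
  rw [← Finsupp.basisSingleOne.span_eq, Finsupp.coe_basisSingleOne, Submodule.span_le]
  rintro _ ⟨σ, rfl⟩
  change Finsupp.single σ 1 ∈ _
  rw [hM.single_eq_sum_weakUpper]
  exact Submodule.sum_mem _ fun w hw => Submodule.subset_span ⟨⟨w, (mem_weakUpper.1 hw).1⟩, rfl⟩

noncomputable def basis (hM : IsMonomialFamily M) : Module.Basis PW ℤ ZS :=
  .mk hM.linearIndependent hM.top_le_span

@[simp]
lemma basis_apply (hM : IsMonomialFamily M) (σ : PW) : hM.basis σ = M σ.1 :=
  Module.Basis.mk_apply _ _ _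

lemma basis_repr_self (hM : IsMonomialFamily M) {u : List ℕ} (hu : IsPermWord u) :
    hM.basis.repr (M u) = Finsupp.single ⟨u, hu⟩ 1 := by
  rw [← hM.basis_apply ⟨u, hu⟩, Module.Basis.repr_self]

lemma oneZS_eq (hM : IsMonomialFamily M) : oneZS = M [] := by
  rw [oneZS, hM.single_eq_sum_weakUpper, weakUpper_nil, Finset.sum_singleton]

end IsMonomialFamily

section Coproduct

def IsSplitAt (w : List ℕ) (i : ℕ) : Prop :=
  w = triangle (stW (w.filter (fun x => i ≤ x))) (w.filter (· < i))

lemma isSplitAt_triangle {u v : List ℕ} (hu : IsPermWord u) (hv : IsPermWord v) :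
    IsSplitAt (triangle v u) u.length := by
  rw [IsSplitAt, triangle_filter_lt hu, stW_triangle_filter_ge hu hv]

lemma isSplitAt_and_eq_iff {τ u v : List ℕ} (hτ : IsPermWord τ) (hu : IsPermWord u)
    (hv : IsPermWord v) {i : ℕ} (hi : i ≤ τ.length) :
    (IsSplitAt τ i ∧ τ.filter (· < i) = u ∧ stW (τ.filter (fun x => i ≤ x)) = v) ↔
      (u.length = i ∧ τ = triangle v u) := by
  constructor
  · rintro ⟨hsplit, rfl, rfl⟩
    exact ⟨by rw [hτ.length_filter_lt]; omega, hsplit⟩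
  · rintro ⟨rfl, rfl⟩
    exact ⟨isSplitAt_triangle hu hv, triangle_filter_lt hu, stW_triangle_filter_ge hu hv⟩

open scoped Classical in
/-- `δ(M_w) = Σ_{w = v △ u} M_u ⊗ M_v`, the factorizations being indexed by `i = |u|`. -/
noncomputable def splitCoproduct (M : List ℕ → ZS) (w : List ℕ) : ZS ⊗[ℤ] ZS :=
  ∑ i ∈ Finset.range (w.length + 1),
    if IsSplitAt w i then M (w.filter (· < i)) ⊗ₜ[ℤ] M (stW (w.filter (fun x => i ≤ x))) else 0

open scoped Classical in
/-- By the interval property `weakLe_triangle_iff`, `w ↦ (u, v)` is a bijection from the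
permutations `w ≥ σ` that split at `i` onto pairs `u ≥ σ|_{<i}`, `v ≥ st(σ|_{≥i})`. -/
lemma sum_isSplitAt_eq_sum_product {β : Type*} [AddCommMonoid β] (F : List ℕ → List ℕ → β)
    {σ : List ℕ} (hσ : IsPermWord σ) {i : ℕ} (hi : i ≤ σ.length) :
    ∑ w ∈ (weakUpper σ).filter (IsSplitAt · i),
        F (w.filter (· < i)) (stW (w.filter (fun x => i ≤ x))) =
      ∑ x ∈ weakUpper (σ.filter (· < i)) ×ˢ weakUpper (stW (σ.filter (fun x => i ≤ x))),
        F x.1 x.2 := by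
  have hlen₁ : (σ.filter (· < i)).length = i := by rw [hσ.length_filter_lt]; omega
  have hlen₂ : (stW (σ.filter (fun x => i ≤ x))).length = σ.length - i := by
    rw [length_stW, hσ.length_filter_ge]
  refine Finset.sum_nbij' (fun w => (w.filter (· < i), stW (w.filter (fun x => i ≤ x))))
    (fun x => triangle x.2 x.1) ?_ ?_ ?_ ?_ fun _ _ => rfl
  · intro w hw
    obtain ⟨hwU, hsplit⟩ := Finset.mem_filter.1 hw
    obtain ⟨hw, hwlen, hle⟩ := mem_weakUpper.1 hwU
    have hc := isPermWord_filter_lt hw i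
    have hd := isPermWord_stW_filter hw (fun x => i ≤ x)
    have hclen : (w.filter (· < i)).length = i := by rw [hw.length_filter_lt]; omega
    have hdlen : (stW (w.filter (fun x => i ≤ x))).length = σ.length - i := by
      rw [length_stW, hw.length_filter_ge, hwlen]
    rw [hsplit, weakLe_triangle_iff hσ hc hd (by omega), hclen] at hle
    exact Finset.mem_product.2 ⟨mem_weakUpper.2 ⟨hc, by rw [hclen, hlen₁], hle.1⟩,
      mem_weakUpper.2 ⟨hd, by rw [hdlen, hlen₂], hle.2⟩⟩
  · rintro ⟨c, d⟩ hx
    simp only [Finset.mem_product, mem_weakUpper, hlen₁, hlen₂] at hx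
    obtain ⟨⟨hc, rfl, hc'⟩, ⟨hd, hdlen, hd'⟩⟩ := hx
    refine Finset.mem_filter.2 ⟨mem_weakUpper.2 ⟨isPermWord_triangle hc hd, by simp; omega, ?_⟩,
      isSplitAt_triangle hc hd⟩
    exact (weakLe_triangle_iff hσ hc hd (by omega)).2 ⟨hc', hd'⟩
  · intro w hw
    exact (Finset.mem_filter.1 hw).2.symm
  · rintro ⟨c, d⟩ hx
    simp only [Finset.mem_product, mem_weakUpper, hlen₁] at hx
    obtain ⟨⟨hc, rfl, -⟩, ⟨hd, -, -⟩⟩ := hx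
    rw [triangle_filter_lt hc, stW_triangle_filter_ge hc hd]

lemma Delta_single_eq_deltaWord (σ : PW) : Delta (Finsupp.single σ 1) = deltaWord σ := by
  rw [Delta, Finsupp.lsum_single, LinearMap.toSpanSingleton_apply, one_smul]

end Coproduct

namespace IsMonomialFamily

variable {M : List ℕ → ZS}

open scoped Classical in
lemma Delta_single_eq_sum_weakUpper (hM : IsMonomialFamily M) (σ : PW) :
    Delta (Finsupp.single σ 1) = ∑ w ∈ weakUpper σ.1, splitCoproduct M w := by
  have hsplit : ∀ i ∈ Finset.range (σ.1.length + 1),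
      Finsupp.single (⟨σ.1.filter (· < i), isPermWord_filter_lt σ.2 i⟩ : PW) (1 : ℤ) ⊗ₜ[ℤ]
        Finsupp.single (⟨stW (σ.1.filter (fun x => i ≤ x)), isPermWord_stW_filter σ.2 _⟩ : PW) 1 =
      ∑ w ∈ weakUpper σ.1, if IsSplitAt w i then
        M (w.filter (· < i)) ⊗ₜ[ℤ] M (stW (w.filter (fun x => i ≤ x))) else 0 := by
    intro i hi
    rw [hM.single_eq_sum_weakUpper, hM.single_eq_sum_weakUpper, ← Finset.sum_filter,
      sum_isSplitAt_eq_sum_product (fun c d => M c ⊗ₜ[ℤ] M d) σ.2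
        (Finset.mem_range_succ_iff.1 hi), Finset.sum_product, TensorProduct.sum_tmul]
    simp_rw [TensorProduct.tmul_sum]
  rw [Delta_single_eq_deltaWord, deltaWord, Finset.sum_congr rfl hsplit, Finset.sum_comm]
  refine Finset.sum_congr rfl fun w hw => ?_
  rw [splitCoproduct, (mem_weakUpper.1 hw).2.1]

lemma Delta_eq_splitCoproduct (hM : IsMonomialFamily M) :
    ∀ u, IsPermWord u → Delta (M u) = splitCoproduct M u :=
  weakUpper_induction fun u hu ih => by
    rw [hM.eq_single_sub_sum ⟨u, hu⟩, map_sub, map_sum, hM.Delta_single_eq_sum_weakUpper,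
      Finset.sum_congr rfl ih, ← Finset.add_sum_erase _ _ (self_mem_weakUpper hu),
      add_sub_cancel_right]

end IsMonomialFamily

noncomputable def primitiveDefect : ZS →ₗ[ℤ] ZS ⊗[ℤ] ZS where
  toFun x := Delta x - (x ⊗ₜ[ℤ] oneZS + oneZS ⊗ₜ[ℤ] x)
  map_add' x y := by
    simp only [map_add, TensorProduct.add_tmul, TensorProduct.tmul_add]
    abel
  map_smul' c x := by
    simp only [map_zsmul, TensorProduct.smul_tmul', TensorProduct.tmul_smul, smul_sub, smul_add,
      RingHom.id_apply]

lemma primitiveDefect_eq_zero_iff {x : ZS} :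
    primitiveDefect x = 0 ↔ Delta x = x ⊗ₜ[ℤ] oneZS + oneZS ⊗ₜ[ℤ] x :=
  sub_eq_zero

namespace IsMonomialFamily

variable {M : List ℕ → ZS}

lemma tensorProduct_repr_tmul (hM : IsMonomialFamily M) {u v : List ℕ} (hu : IsPermWord u)
    (hv : IsPermWord v) (p q : PW) :
    (hM.basis.tensorProduct hM.basis).repr (M u ⊗ₜ[ℤ] M v) (p, q) =
      if u = p.1 ∧ v = q.1 then 1 else 0 := by
  have h : M u ⊗ₜ[ℤ] M v = hM.basis.tensorProduct hM.basis (⟨u, hu⟩, ⟨v, hv⟩) := by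
    rw [Module.Basis.tensorProduct_apply, basis_apply, basis_apply]
  rw [h, Module.Basis.repr_self, Finsupp.single_apply]
  simp only [Prod.mk.injEq, Subtype.ext_iff, eq_comm]

open scoped Classical in
lemma tensorProduct_repr_splitCoproduct (hM : IsMonomialFamily M) {τ : List ℕ}
    (hτ : IsPermWord τ) (p q : PW) :
    (hM.basis.tensorProduct hM.basis).repr (splitCoproduct M τ) (p, q) =
      if τ = triangle q.1 p.1 then 1 else 0 := by
  have hterm : ∀ i ∈ Finset.range (τ.length + 1), (hM.basis.tensorProduct hM.basis).repr
      (if IsSplitAt τ i then M (τ.filter (· < i)) ⊗ₜ[ℤ] M (stW (τ.filter (fun x => i ≤ x)))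
        else 0) (p, q) = if p.1.length = i then (if τ = triangle q.1 p.1 then 1 else 0) else 0 := by
    intro i hi
    have key := isSplitAt_and_eq_iff hτ p.2 q.2 (Finset.mem_range_succ_iff.1 hi)
    by_cases hsplit : IsSplitAt τ i
    · rw [if_pos hsplit, hM.tensorProduct_repr_tmul (isPermWord_filter_lt hτ i)
        (isPermWord_stW_filter hτ _)]
      simp only [hsplit, true_and] at key
      simp only [key, ite_and]
    · rw [if_neg hsplit, map_zero, Finsupp.zero_apply]
      split_ifs with h₁ h₂
      · exact absurd (key.2 ⟨h₁, h₂⟩).1 hsplit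
      all_goals rfl
  rw [splitCoproduct, map_sum, Finsupp.finsetSum_apply, Finset.sum_congr rfl hterm,
    Finset.sum_ite_eq]
  by_cases h : τ = triangle q.1 p.1
  · rw [if_pos (Finset.mem_range_succ_iff.2 (by rw [h, length_triangle]; omega))]
  · simp [h]

lemma tensorProduct_repr_primitiveDefect (hM : IsMonomialFamily M) {τ : List ℕ}
    (hτ : IsPermWord τ) (p q : PW) :
    (hM.basis.tensorProduct hM.basis).repr (primitiveDefect (M τ)) (p, q) =
      if τ = [] then -(if p.1 = [] ∧ q.1 = [] then 1 else 0)
      else if p.1 ≠ [] ∧ q.1 ≠ [] ∧ τ = triangle q.1 p.1 then 1 else 0 := by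
  have hnil : IsPermWord [] := by simp [IsPermWord]
  change (hM.basis.tensorProduct hM.basis).repr
    (Delta (M τ) - (M τ ⊗ₜ[ℤ] oneZS + oneZS ⊗ₜ[ℤ] M τ)) (p, q) = _
  rw [hM.oneZS_eq, hM.Delta_eq_splitCoproduct τ hτ, map_sub, map_add, Finsupp.sub_apply,
    Finsupp.add_apply,
    hM.tensorProduct_repr_splitCoproduct hτ, hM.tensorProduct_repr_tmul hτ hnil,
    hM.tensorProduct_repr_tmul hnil hτ]
  by_cases hp : p.1 = [] <;> by_cases hq : q.1 = [] <;> by_cases hτn : τ = [] <;>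
    simp [hp, hq, hτn, triangle_nil_left, triangle_nil_right, triangle_eq_nil_iff, eq_comm]

lemma primitiveDefect_eq_zero_of_triIndec (hM : IsMonomialFamily M) {σ : PW} (hσ : TriIndec σ.1) :
    primitiveDefect (M σ.1) = 0 := by
  refine ((hM.basis.tensorProduct hM.basis).ext_elem_iff).2 fun ⟨p, q⟩ => ?_
  rw [hM.tensorProduct_repr_primitiveDefect σ.2, if_neg hσ.1, map_zero, Finsupp.zero_apply,
    if_neg]
  rintro ⟨hp, hq, h⟩
  exact (hσ.2 p.1 q.1 p.2 q.2 h).elim hp hq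

/-- For `σ` with a global descent, a coordinate of the tensor basis (at `(∅, ∅)` if `σ = ∅`, at
`(u, v)` for a nontrivial factorization `σ = v △ u` otherwise) detects `M_σ` in the image of
`primitiveDefect`. -/
lemma exists_functional_primitiveDefect_eq_coord (hM : IsMonomialFamily M) {σ : PW}
    (hσ : ¬ TriIndec σ.1) :
    ∃ φ : ZS ⊗[ℤ] ZS →ₗ[ℤ] ℤ,
      ∀ τ, φ (primitiveDefect (hM.basis τ)) = hM.basis.coord σ (hM.basis τ) := by
  have hnil : IsPermWord [] := by simp [IsPermWord]
  by_cases hσnil : σ.1 = []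
  · refine ⟨-(hM.basis.tensorProduct hM.basis).coord (⟨[], hnil⟩, ⟨[], hnil⟩),
      fun τ => ?_⟩
    rw [hM.basis_apply, Module.Basis.coord_apply]
    change -(hM.basis.tensorProduct hM.basis).repr (primitiveDefect (M τ.1))
      (⟨[], hnil⟩, ⟨[], hnil⟩) = _
    rw [hM.tensorProduct_repr_primitiveDefect τ.2, hM.basis_repr_self τ.2, Finsupp.single_apply]
    by_cases hτ : τ.1 = [] <;> simp [hτ, hσnil, Subtype.ext_iff]
  · obtain ⟨u, v, hu, hv, h, hun, hvn⟩ : ∃ u v, IsPermWord u ∧ IsPermWord v ∧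
        σ.1 = triangle v u ∧ u ≠ [] ∧ v ≠ [] := by
      simpa [TriIndec, hσnil] using hσ
    refine ⟨(hM.basis.tensorProduct hM.basis).coord (⟨u, hu⟩, ⟨v, hv⟩),
      fun τ => ?_⟩
    rw [hM.basis_apply, Module.Basis.coord_apply]
    change (hM.basis.tensorProduct hM.basis).repr (primitiveDefect (M τ.1))
      (⟨u, hu⟩, ⟨v, hv⟩) = _
    rw [hM.tensorProduct_repr_primitiveDefect τ.2, hM.basis_repr_self τ.2, Finsupp.single_apply]
    by_cases hτ : τ.1 = [] <;> simp [hτ, hun, hvn, Subtype.ext_iff, h, eq_comm, triangle_eq_nil_iff]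

end IsMonomialFamily

open scoped Classical in
/-- For the monomial basis `(M_σ)` of `ℤS` (defined by Möbius
inversion `σ = Σ_{σ ≤ w} M_w` over the right weak order), `M_σ` is primitive iff
`σ` is `△`-indecomposable (has no global descent); and the primitive elements of
`ℤS` are exactly the span of these `M_σ`. -/
theorem primitives_of_ZS (M : List ℕ → ZS)
    (hM : ∀ σ : PW, Finsupp.single σ (1 : ℤ) =
      ∑ w ∈ permsOf σ.1.length, if weakLe σ.1 w then M w else 0) :
    (∀ σ : PW, (Delta (M σ.1) = M σ.1 ⊗ₜ[ℤ] oneZS + oneZS ⊗ₜ[ℤ] M σ.1) ↔ TriIndec σ.1) ∧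
    {x : ZS | Delta x = x ⊗ₜ[ℤ] oneZS + oneZS ⊗ₜ[ℤ] x} =
      (Submodule.span ℤ {y : ZS | ∃ σ : PW, TriIndec σ.1 ∧ y = M σ.1} : Set ZS) := by
  have hM : IsMonomialFamily M := hM
  have hker := hM.basis.ker_eq_span_image primitiveDefect {σ | TriIndec σ.1}
    (fun σ hσ => by rw [hM.basis_apply]; exact hM.primitiveDefect_eq_zero_of_triIndec hσ)
    (fun σ hσ => hM.exists_functional_primitiveDefect_eq_coord hσ)
  have himage : hM.basis '' {σ | TriIndec σ.1} = {y | ∃ σ : PW, TriIndec σ.1 ∧ y = M σ.1} := by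
    ext y
    simp [eq_comm]
  have hprim : ∀ x : ZS, Delta x = x ⊗ₜ[ℤ] oneZS + oneZS ⊗ₜ[ℤ] x ↔
      x ∈ Submodule.span ℤ (hM.basis '' {σ | TriIndec σ.1}) := fun x => by
    rw [← primitiveDefect_eq_zero_iff, ← LinearMap.mem_ker, hker]
  refine ⟨fun σ => ?_, Set.ext fun x => ?_⟩
  · rw [hprim, ← hM.basis_apply, hM.basis.self_mem_span_image]
    rfl
  · rw [Set.mem_ofPred_eq, hprim, himage, SetLike.mem_coe]
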